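/- Consider the attitude kinematics and observer on SO(3): R, R̄ : ℝ → ℝ³ˣ³ are differentiable with R(t), R̄(t) ∈ SO(3) for all t ≥ 0, Ω : ℝ → ℝ³, γ ∈ ℝ³ is a constant gyro bias, γ̄ : ℝ → ℝ³ is differentiable, s₁,…,sₙ : ℝ → ℝ³ are differentiable with ‖sᵢ(t)‖ = 1, wᵢ > 0, G(t) = Σᵢ wᵢ sᵢ(t)sᵢ(t)ᵀ, e_R(t) = (R(t)ᵀG(t)R̄(t) − R̄(t)ᵀG(t)R(t))^∨, and the equations R′(t) = R(t)·(Ω(t))^, R̄′(t) = R̄(t)·(Ω(t) + γ − γ̄(t) − k_R e_R(t))^, γ̄′(t) = k_γ e_R(t) hold for positive gains k_R, k_γ. Suppose ‖G′(t)‖ ≤ d for all t ≥ 0 and some d > 0. Set E_R(t) = R(t) − R̄(t), e_γ(t) = γ − γ̄(t), and V₀(t) = ½⟨G(t)E_R(t), E_R(t)⟩ + (1/(2k_γ))‖e_γ(t)‖². Then V₀ is differentiable and for all t ≥ 0, V₀′(t) ≤ −k_R·‖e_R(t)‖² + (d/2)·‖E_R(t)‖². -/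

import Mathlib

open Matrix Polynomial

noncomputable section

/-- The hat map sending `x ∈ ℝ³` to the skew-symmetric matrix `x̂` with `x̂ y = x × y`. -/
def hat (x : Fin 3 → ℝ) : Matrix (Fin 3) (Fin 3) ℝ :=
  !![0, -x 2, x 1; x 2, 0, -x 0; -x 1, x 0, 0]

/-- The vee map, inverse of the hat map on skew-symmetric `3 × 3` matrices. -/
def vee (A : Matrix (Fin 3) (Fin 3) ℝ) : Fin 3 → ℝ :=
  ![A 2 1, A 0 2, A 1 0]

/-- `SO3 R` iff `R` is a rotation matrix: `RᵀR = I₃` and `det R = 1`. -/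
def SO3 (R : Matrix (Fin 3) (Fin 3) ℝ) : Prop :=
  Rᵀ * R = 1 ∧ R.det = 1

/-- Frobenius inner product `⟨A,B⟩ = tr(AᵀB)`. -/
def finner (A B : Matrix (Fin 3) (Fin 3) ℝ) : ℝ := (Aᵀ * B).trace

/-- Frobenius norm `‖A‖ = √⟨A,A⟩`. -/
def fnorm (A : Matrix (Fin 3) (Fin 3) ℝ) : ℝ := Real.sqrt (finner A A)

/-- Euclidean norm of a vector. -/
def vnorm {k : ℕ} (x : Fin k → ℝ) : ℝ := Real.sqrt (x ⬝ᵥ x)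

/-- Third standard basis vector `e₃ = (0,0,1)` of `ℝ³`. -/
def e3 : Fin 3 → ℝ := ![0, 0, 1]

/-!
Write `E = R - R̄` and `e_γ = γ - γ̄`. Differentiating `½⟨GE, E⟩` gives `½⟨G'E, E⟩ + ⟨GE, Ė⟩`
because `G` is symmetric, and `Ė = R Ω̂ - R̄ (Ω + e_γ - k_R e_R)^`. Since `tr(M x̂) = -(M - Mᵀ)^∨ ⬝ x`,
the `Ω` contributions cancel (`EᵀGE` is symmetric) and `⟨GE, Ė⟩ = e_R ⬝ (e_γ - k_R e_R)`. The
bias term contributes `-e_R ⬝ e_γ`, so `V₀' = ½⟨G'E, E⟩ - k_R‖e_R‖²`, and Cauchy–Schwarz with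
submultiplicativity of the Frobenius norm bounds `⟨G'E, E⟩ ≤ ‖G'‖‖E‖² ≤ d‖E‖²`.
-/

open Finset

lemma finner_eq_sum (A B : Matrix (Fin 3) (Fin 3) ℝ) :
    finner A B = ∑ p : Fin 3 × Fin 3, A p.1 p.2 * B p.1 p.2 := by
  rw [Fintype.sum_prod_type, Finset.sum_comm]
  simp [finner, Matrix.trace, Matrix.mul_apply]

lemma finner_add_left (A B C : Matrix (Fin 3) (Fin 3) ℝ) :
    finner (A + B) C = finner A C + finner B C := by
  simp [finner, Matrix.add_mul, trace_add]

lemma finner_mul_comm_of_transpose_eq {G : Matrix (Fin 3) (Fin 3) ℝ} (hG : Gᵀ = G)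
    (A B : Matrix (Fin 3) (Fin 3) ℝ) : finner (G * A) B = finner (G * B) A := by
  rw [finner, ← trace_transpose, finner]
  simp [Matrix.transpose_mul, hG, Matrix.mul_assoc]

lemma fnorm_eq_sqrt_sum_sq (A : Matrix (Fin 3) (Fin 3) ℝ) :
    fnorm A = √(∑ p : Fin 3 × Fin 3, A p.1 p.2 ^ 2) := by
  simp only [fnorm, finner_eq_sum, sq]

lemma finner_le_fnorm_mul_fnorm (A B : Matrix (Fin 3) (Fin 3) ℝ) :
    finner A B ≤ fnorm A * fnorm B := by
  rw [finner_eq_sum, fnorm_eq_sqrt_sum_sq, fnorm_eq_sqrt_sum_sq]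
  exact Real.sum_mul_le_sqrt_mul_sqrt _ _ _

section Frobenius

open scoped Matrix.Norms.Frobenius

lemma fnorm_eq_norm (A : Matrix (Fin 3) (Fin 3) ℝ) : fnorm A = ‖A‖ := by
  rw [fnorm_eq_sqrt_sum_sq, frobenius_norm_def, Fintype.sum_prod_type, Real.sqrt_eq_rpow]
  simp

lemma fnorm_mul_le (A B : Matrix (Fin 3) (Fin 3) ℝ) : fnorm (A * B) ≤ fnorm A * fnorm B := by
  simpa only [fnorm_eq_norm] using frobenius_norm_mul A B

end Frobenius

lemma finner_mul_self_le (A E : Matrix (Fin 3) (Fin 3) ℝ) :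
    finner (A * E) E ≤ fnorm A * fnorm E ^ 2 :=
  calc finner (A * E) E ≤ fnorm (A * E) * fnorm E := finner_le_fnorm_mul_fnorm _ _
    _ ≤ fnorm A * fnorm E * fnorm E :=
      mul_le_mul_of_nonneg_right (fnorm_mul_le A E) (Real.sqrt_nonneg _)
    _ = fnorm A * fnorm E ^ 2 := by ring

lemma vnorm_sq {k : ℕ} (x : Fin k → ℝ) : vnorm x ^ 2 = x ⬝ᵥ x :=
  Real.sq_sqrt (Finset.sum_nonneg fun _ _ => mul_self_nonneg _)

lemma transpose_sum_smul_vecMulVec_self {ι m : Type*} [Fintype ι] (w : ι → ℝ)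
    (v : ι → m → ℝ) : (∑ i, w i • vecMulVec (v i) (v i))ᵀ = ∑ i, w i • vecMulVec (v i) (v i) := by
  simp [transpose_sum, transpose_smul, transpose_vecMulVec]

lemma trace_mul_hat (M : Matrix (Fin 3) (Fin 3) ℝ) (b : Fin 3 → ℝ) :
    (M * hat b).trace = -(vee (M - Mᵀ) ⬝ᵥ b) := by
  simp [hat, vee, Matrix.trace, Matrix.mul_apply, dotProduct, Fin.sum_univ_succ]
  ring

lemma finner_mul_sub_mul_hat {G : Matrix (Fin 3) (Fin 3) ℝ} (hG : Gᵀ = G)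
    (R Rbar : Matrix (Fin 3) (Fin 3) ℝ) (Ω b : Fin 3 → ℝ) :
    finner (G * (R - Rbar)) (R * hat Ω - Rbar * hat (Ω + b))
      = vee (Rᵀ * G * Rbar - Rbarᵀ * G * R) ⬝ᵥ b := by
  set Q := Rᵀ * G * Rbar - Rbarᵀ * G * R
  have hR : (R - Rbar)ᵀ * G * R - ((R - Rbar)ᵀ * G * R)ᵀ = Q := by
    simp only [Q, Matrix.transpose_mul, Matrix.transpose_sub, Matrix.transpose_transpose, hG]
    noncomm_ring
  have hRbar : (R - Rbar)ᵀ * G * Rbar - ((R - Rbar)ᵀ * G * Rbar)ᵀ = Q := by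
    simp only [Q, Matrix.transpose_mul, Matrix.transpose_sub, Matrix.transpose_transpose, hG]
    noncomm_ring
  calc finner (G * (R - Rbar)) (R * hat Ω - Rbar * hat (Ω + b))
      = ((R - Rbar)ᵀ * G * R * hat Ω).trace - ((R - Rbar)ᵀ * G * Rbar * hat (Ω + b)).trace := by
        rw [finner, Matrix.transpose_mul, hG, Matrix.mul_sub, trace_sub, ← Matrix.mul_assoc,
          ← Matrix.mul_assoc]
    _ = vee Q ⬝ᵥ b := by
        rw [trace_mul_hat, trace_mul_hat, hR, hRbar, dotProduct_add]
        ring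

def HasEntrywiseDerivAt {m n : Type*} (A : ℝ → Matrix m n ℝ) (A' : Matrix m n ℝ) (t : ℝ) :
    Prop :=
  ∀ i j, HasDerivAt (fun τ => A τ i j) (A' i j) t

namespace HasEntrywiseDerivAt

variable {l m n : Type*} {t : ℝ}

lemma sub {A B : ℝ → Matrix m n ℝ} {A' B' : Matrix m n ℝ} (hA : HasEntrywiseDerivAt A A' t)
    (hB : HasEntrywiseDerivAt B B' t) : HasEntrywiseDerivAt (fun τ => A τ - B τ) (A' - B') t :=
  fun i j => (hA i j).sub (hB i j)

lemma mul [Fintype m] {A : ℝ → Matrix l m ℝ} {B : ℝ → Matrix m n ℝ} {A' : Matrix l m ℝ}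
    {B' : Matrix m n ℝ} (hA : HasEntrywiseDerivAt A A' t) (hB : HasEntrywiseDerivAt B B' t) :
    HasEntrywiseDerivAt (fun τ => A τ * B τ) (A' * B t + A t * B') t := by
  intro i j
  simp only [Matrix.add_apply, Matrix.mul_apply, ← sum_add_distrib]
  exact HasDerivAt.fun_sum fun k _ => (hA i k).mul (hB k j)

lemma finner {A B : ℝ → Matrix (Fin 3) (Fin 3) ℝ} {A' B' : Matrix (Fin 3) (Fin 3) ℝ}
    (hA : HasEntrywiseDerivAt A A' t) (hB : HasEntrywiseDerivAt B B' t) :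
    HasDerivAt (fun τ => _root_.finner (A τ) (B τ))
      (_root_.finner A' (B t) + _root_.finner (A t) B') t := by
  simp only [finner_eq_sum, ← sum_add_distrib]
  exact HasDerivAt.fun_sum fun p _ => (hA p.1 p.2).mul (hB p.1 p.2)

end HasEntrywiseDerivAt

lemma HasDerivAt.dotProduct {ι : Type*} [Fintype ι] {u v : ℝ → ι → ℝ} {u' v' : ι → ℝ} {t : ℝ}
    (hu : HasDerivAt u u' t) (hv : HasDerivAt v v' t) :
    HasDerivAt (fun τ => u τ ⬝ᵥ v τ) (u' ⬝ᵥ v t + u t ⬝ᵥ v') t := by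
  simp only [_root_.dotProduct, ← sum_add_distrib]
  exact HasDerivAt.fun_sum fun i _ => (hasDerivAt_pi.1 hu i).mul (hasDerivAt_pi.1 hv i)

lemma hasDerivAt_observer_lyapunov {R Rbar G : ℝ → Matrix (Fin 3) (Fin 3) ℝ}
    {γbar : ℝ → Fin 3 → ℝ} {G' : Matrix (Fin 3) (Fin 3) ℝ} {Ω γ e : Fin 3 → ℝ} {kR kγ t : ℝ}
    (hkγ : kγ ≠ 0) (hGsymm : (G t)ᵀ = G t)
    (he : e = vee ((R t)ᵀ * G t * Rbar t - (Rbar t)ᵀ * G t * R t))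
    (hR : HasEntrywiseDerivAt R (R t * hat Ω) t)
    (hRbar : HasEntrywiseDerivAt Rbar (Rbar t * hat (Ω + γ - γbar t - kR • e)) t)
    (hγbar : HasDerivAt γbar (kγ • e) t) (hG : HasEntrywiseDerivAt G G' t) :
    HasDerivAt (fun τ => 1 / 2 * finner (G τ * (R τ - Rbar τ)) (R τ - Rbar τ) +
        1 / (2 * kγ) * vnorm (γ - γbar τ) ^ 2)
      (1 / 2 * finner (G' * (R t - Rbar t)) (R t - Rbar t) - kR * (e ⬝ᵥ e)) t := by
  have hE := hR.sub hRbar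
  have hγ : HasDerivAt (fun τ => γ - γbar τ) (0 - kγ • e) t := (hasDerivAt_const t γ).sub hγbar
  have hV := (((hG.mul hE).finner hE).const_mul (1 / 2)).fun_add
    ((hγ.dotProduct hγ).const_mul (1 / (2 * kγ)))
  simp only [← vnorm_sq] at hV
  refine hV.congr_deriv ?_
  have hcross : finner (G t * (R t - Rbar t))
      (R t * hat Ω - Rbar t * hat (Ω + γ - γbar t - kR • e)) = e ⬝ᵥ (γ - γbar t) - kR * (e ⬝ᵥ e) := by
    rw [show Ω + γ - γbar t - kR • e = Ω + (γ - γbar t - kR • e) by abel,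
      finner_mul_sub_mul_hat hGsymm, ← he, dotProduct_sub, dotProduct_smul, smul_eq_mul]
  rw [finner_add_left, finner_mul_comm_of_transpose_eq hGsymm _ (R t - Rbar t), hcross]
  simp only [zero_sub, neg_dotProduct, dotProduct_neg, smul_dotProduct, dotProduct_smul, smul_eq_mul,
    dotProduct_comm (γ - γbar t) e]
  field_simp
  ring

theorem stmt_17_general {n : ℕ}
    (R Rbar : ℝ → Matrix (Fin 3) (Fin 3) ℝ) (Ω : ℝ → Fin 3 → ℝ)
    (γ : Fin 3 → ℝ) (γbar : ℝ → Fin 3 → ℝ)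
    (s : Fin n → ℝ → Fin 3 → ℝ) (w : Fin n → ℝ)
    (kR kγ d : ℝ)
    (hkγ : 0 < kγ)
    (G : ℝ → Matrix (Fin 3) (Fin 3) ℝ)
    (hGdef : ∀ t, G t = ∑ i, w i • vecMulVec (s i t) (s i t))
    (eR : ℝ → Fin 3 → ℝ)
    (heR : ∀ t, eR t = vee ((R t)ᵀ * G t * Rbar t - (Rbar t)ᵀ * G t * R t))
    (hRdot : ∀ t ≥ (0 : ℝ), ∀ i j, HasDerivAt (fun τ => R τ i j) ((R t * hat (Ω t)) i j) t)
    (hRbardot : ∀ t ≥ (0 : ℝ), ∀ i j, HasDerivAt (fun τ => Rbar τ i j)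
      ((Rbar t * hat (Ω t + γ - γbar t - kR • eR t)) i j) t)
    (hγbardot : ∀ t ≥ (0 : ℝ), HasDerivAt γbar (kγ • eR t) t)
    (G' : ℝ → Matrix (Fin 3) (Fin 3) ℝ)
    (hG' : ∀ t ≥ (0 : ℝ), ∀ i j, HasDerivAt (fun τ => G τ i j) (G' t i j) t)
    (hGdot : ∀ t ≥ (0 : ℝ), fnorm (G' t) ≤ d)
    (V₀ : ℝ → ℝ)
    (hV₀ : ∀ t, V₀ t = (1 / 2) * finner (G t * (R t - Rbar t)) (R t - Rbar t) +
      (1 / (2 * kγ)) * vnorm (γ - γbar t) ^ 2) :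
    (∀ t ≥ (0 : ℝ), DifferentiableAt ℝ V₀ t) ∧
    ∀ t ≥ (0 : ℝ), deriv V₀ t ≤ -kR * vnorm (eR t) ^ 2 + d / 2 * fnorm (R t - Rbar t) ^ 2 := by
  have hV : ∀ t ≥ (0 : ℝ), HasDerivAt V₀
      (1 / 2 * finner (G' t * (R t - Rbar t)) (R t - Rbar t) - kR * (eR t ⬝ᵥ eR t)) t := by
    intro t ht
    rw [funext hV₀]
    exact hasDerivAt_observer_lyapunov hkγ.ne'
      (by rw [hGdef]; exact transpose_sum_smul_vecMulVec_self _ _) (heR t)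
      (hRdot t ht) (hRbardot t ht) (hγbardot t ht) (hG' t ht)
  refine ⟨fun t ht => (hV t ht).differentiableAt, fun t ht => ?_⟩
  have hquad : finner (G' t * (R t - Rbar t)) (R t - Rbar t) ≤ d * fnorm (R t - Rbar t) ^ 2 :=
    (finner_mul_self_le _ _).trans (by gcongr; exact hGdot t ht)
  rw [(hV t ht).deriv, vnorm_sq]
  linarith

/-- along the observer dynamics, the Lyapunov function
`V₀(t) = ½⟨G(t)E_R(t), E_R(t)⟩ + (1/(2k_γ))‖e_γ(t)‖²` is differentiable and satisfies
`V₀′(t) ≤ −k_R ‖e_R(t)‖² + (d/2)‖E_R(t)‖²` for all `t ≥ 0`. -/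
theorem stmt_17 {n : ℕ}
    (R Rbar : ℝ → Matrix (Fin 3) (Fin 3) ℝ) (Ω : ℝ → Fin 3 → ℝ)
    (γ : Fin 3 → ℝ) (γbar : ℝ → Fin 3 → ℝ)
    (s : Fin n → ℝ → Fin 3 → ℝ) (w : Fin n → ℝ)
    (kR kγ d : ℝ)
    (hSO3 : ∀ t ≥ (0 : ℝ), SO3 (R t) ∧ SO3 (Rbar t))
    (hw : ∀ i, 0 < w i) (hs : ∀ i t, (s i t) ⬝ᵥ (s i t) = 1)
    (hsdiff : ∀ i t, DifferentiableAt ℝ (s i) t)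
    (hkR : 0 < kR) (hkγ : 0 < kγ) (hd : 0 < d)
    (G : ℝ → Matrix (Fin 3) (Fin 3) ℝ)
    (hGdef : ∀ t, G t = ∑ i, w i • vecMulVec (s i t) (s i t))
    (eR : ℝ → Fin 3 → ℝ)
    (heR : ∀ t, eR t = vee ((R t)ᵀ * G t * Rbar t - (Rbar t)ᵀ * G t * R t))
    (hRdot : ∀ t ≥ (0 : ℝ), ∀ i j, HasDerivAt (fun τ => R τ i j) ((R t * hat (Ω t)) i j) t)
    (hRbardot : ∀ t ≥ (0 : ℝ), ∀ i j, HasDerivAt (fun τ => Rbar τ i j)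
      ((Rbar t * hat (Ω t + γ - γbar t - kR • eR t)) i j) t)
    (hγbardot : ∀ t ≥ (0 : ℝ), HasDerivAt γbar (kγ • eR t) t)
    (G' : ℝ → Matrix (Fin 3) (Fin 3) ℝ)
    (hG' : ∀ t ≥ (0 : ℝ), ∀ i j, HasDerivAt (fun τ => G τ i j) (G' t i j) t)
    (hGdot : ∀ t ≥ (0 : ℝ), fnorm (G' t) ≤ d)
    (V₀ : ℝ → ℝ)
    (hV₀ : ∀ t, V₀ t = (1 / 2) * finner (G t * (R t - Rbar t)) (R t - Rbar t) +
      (1 / (2 * kγ)) * vnorm (γ - γbar t) ^ 2) :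
    (∀ t ≥ (0 : ℝ), DifferentiableAt ℝ V₀ t) ∧
    ∀ t ≥ (0 : ℝ), deriv V₀ t ≤ -kR * vnorm (eR t) ^ 2 + d / 2 * fnorm (R t - Rbar t) ^ 2 :=
  stmt_17_general R Rbar Ω γ γbar s w kR kγ d hkγ G hGdef eR heR hRdot hRbardot hγbardot G' hG'
    hGdot V₀ hV₀
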